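/- arXiv:1608.04414 — 2 statements merged into one kernel-verified Lean document; each statement's English description precedes it below -/
import Mathlib

section
/- Let W ⊆ {-1,1}^d be a set of vectors such that ⟨u, v⟩ ≤ d/2 for all distinct u, v ∈ W, for V ⊆ W define g_V(x) = max{1/2, max_{w ∈ V} ⟨w̄, x⟩} with w̄ = w/√d, and let V be a uniformly random subset of W (each element of W included independently with probability 1/2). Then for every w ∈ W, the expectation E_V[g_V(w̄)] equals 3/4. -/
open scoped RealInnerProductSpace BigOperators

/-- `g_V(x) = max{1/2, max_{w ∈ V} ⟨w/√d, x⟩}`, the inner maximum being `1/2` for `V = ∅`. -/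
noncomputable def gV {d : ℕ} (V : Finset (EuclideanSpace ℝ (Fin d)))
    (x : EuclideanSpace ℝ (Fin d)) : ℝ :=
  V.fold max (1/2) (fun w => ⟪(Real.sqrt d)⁻¹ • w, x⟫)

/-- If `W ⊆ {-1,1}^d` satisfies `⟨u,v⟩ ≤ d/2` for all distinct `u, v ∈ W`, and
`V` is a uniformly random subset of `W` (each element included independently with
probability 1/2, i.e. `V` uniform over the powerset of `W`), then for every `w ∈ W` the
expectation `E_V[g_V(w̄)]` equals `3/4`, where `w̄ = w/√d`. -/
theorem expectation_gV_at_normalized_point {d : ℕ} (hd : 0 < d)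
    (W : Finset (EuclideanSpace ℝ (Fin d)))
    (hW : ∀ w ∈ W, ∀ i : Fin d, w i = 1 ∨ w i = -1)
    (hsep : ∀ u ∈ W, ∀ v ∈ W, u ≠ v → ⟪u, v⟫ ≤ (d : ℝ) / 2)
    (w : EuclideanSpace ℝ (Fin d)) (hw : w ∈ W) :
    (∑ V ∈ W.powerset, gV V ((Real.sqrt d)⁻¹ • w)) / (W.powerset.card : ℝ) = 3/4 := by
  classical
  have hd0 : (0:ℝ) < d := by exact_mod_cast hd
  have hsmul : ∀ v : EuclideanSpace ℝ (Fin d),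
      ⟪(Real.sqrt d)⁻¹ • v, (Real.sqrt d)⁻¹ • w⟫ = (d:ℝ)⁻¹ * ⟪v, w⟫ := by
    intro v
    rw [real_inner_smul_left, real_inner_smul_right, ← mul_assoc, ← mul_inv,
      Real.mul_self_sqrt hd0.le]
  have hww : ⟪w, w⟫ = (d : ℝ) := by
    rw [show ⟪w, w⟫ = ∑ i, w i * w i from by
      simp [PiLp.inner_apply, RCLike.inner_apply, -inner_self_eq_norm_sq_to_K]]
    have h1 : ∀ i ∈ (Finset.univ : Finset (Fin d)), w i * w i = (1:ℝ) := by
      intro i _; rcases hW w hw i with h | h <;> simp [h]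
    rw [Finset.sum_congr rfl h1, Finset.sum_const]; simp
  have hfold : ∀ V ∈ W.powerset,
      gV V ((Real.sqrt d)⁻¹ • w) = if w ∈ V then 1 else 1/2 := by
    intro V hV
    rw [Finset.mem_powerset] at hV
    have hle : ∀ v ∈ V, ⟪(Real.sqrt d)⁻¹ • v, (Real.sqrt d)⁻¹ • w⟫ ≤
        (if v = w then (1:ℝ) else 1/2) := by
      intro v hvV
      rw [hsmul]
      by_cases hvw : v = w
      · rw [if_pos hvw, hvw, hww, inv_mul_cancel₀ (ne_of_gt hd0)]
      · simp only [hvw, if_false]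
        have := hsep v (hV hvV) w hw hvw
        calc (d:ℝ)⁻¹ * ⟪v, w⟫ ≤ (d:ℝ)⁻¹ * ((d:ℝ)/2) := by
              exact mul_le_mul_of_nonneg_left this (by positivity)
          _ = 1/2 := by field_simp
    unfold gV
    by_cases hwV : w ∈ V
    · simp only [hwV, if_true]
      apply le_antisymm
      · rw [Finset.fold_max_le]
        refine ⟨by norm_num, fun v hvV => ?_⟩
        exact le_trans (hle v hvV) (by split <;> norm_num)
      · rw [Finset.le_fold_max]
        right; exact ⟨w, hwV, by rw [hsmul, hww, inv_mul_cancel₀ (ne_of_gt hd0)]⟩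
    · simp only [hwV, if_false]
      apply le_antisymm
      · rw [Finset.fold_max_le]
        refine ⟨le_refl _, fun v hvV => ?_⟩
        have hvw : v ≠ w := fun h => hwV (h ▸ hvV)
        simpa [hvw] using hle v hvV
      · rw [Finset.le_fold_max]; left; rfl
  rw [Finset.sum_congr rfl hfold]
  have hwer : w ∉ W.erase w := Finset.notMem_erase w W
  have hWi : W = insert w (W.erase w) := (Finset.insert_erase hw).symm
  rw [hWi, Finset.sum_powerset_insert hwer, Finset.card_powerset,
    Finset.card_insert_of_notMem hwer]
  have h1 : ∑ V ∈ (W.erase w).powerset, (if w ∈ V then (1:ℝ) else 1/2)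
      = (2 ^ (W.erase w).card : ℝ) * (1/2) := by
    have hc : ∀ V ∈ (W.erase w).powerset, (if w ∈ V then (1:ℝ) else 1/2) = 1/2 := by
      intro V hV
      rw [Finset.mem_powerset] at hV
      have : w ∉ V := fun h => hwer (hV h)
      simp [this]
    rw [Finset.sum_congr rfl hc, Finset.sum_const, Finset.card_powerset]
    simp [mul_comm]
  have h2 : ∑ V ∈ (W.erase w).powerset, (if w ∈ insert w V then (1:ℝ) else 1/2)
      = (2 ^ (W.erase w).card : ℝ) := by
    have hc : ∀ V ∈ (W.erase w).powerset, (if w ∈ insert w V then (1:ℝ) else 1/2) = 1 := by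
      intro V _; simp
    rw [Finset.sum_congr rfl hc, Finset.sum_const, Finset.card_powerset]
    simp
  rw [h1, h2]
  have hp : (0:ℝ) < 2 ^ (W.erase w).card := by positivity
  rw [pow_succ]
  push_cast
  field_simp
  ring
end

section
/- (Main lower bound, non-smooth ℓ₂ case) Let K be the closed Euclidean unit ball B₂^d in ℝ^d, let W ⊆ {-1,1}^d satisfy |W| ≥ 2^{d/6} and ⟨u,v⟩ ≤ d/2 for all distinct u, v ∈ W, and for V ⊆ W define g_V(x) = max{1/2, max_{w ∈ V} ⟨w/√d, x⟩}. Let D be the uniform distribution over {g_V : V ⊆ W}, let F_D(x) = E_{V}[g_V(x)], F* = min_{x ∈ K} F_D(x), and for a sample S = (V₁,...,Vₙ) let F_S(x) = (1/n) Σᵢ g_{Vᵢ}(x). Then for every n ≤ d/6, with probability greater than 1/2 over S drawn as n i.i.d. uniform subsets of W, there exists a point x̂ ∈ K with F_S(x̂) = min_{x ∈ K} F_S(x) and F_D(x̂) - F* ≥ 1/4. -/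
open scoped RealInnerProductSpace BigOperators
attribute [local instance] Classical.propDecidable

lemma gV_ge {d : ℕ} (V : Finset (EuclideanSpace ℝ (Fin d))) (x : EuclideanSpace ℝ (Fin d)) :
    (1:ℝ)/2 ≤ gV V x := by
  unfold gV; rw [Finset.le_fold_max]; exact Or.inl le_rfl

lemma gV_le {d : ℕ} {V : Finset (EuclideanSpace ℝ (Fin d))} {x : EuclideanSpace ℝ (Fin d)}
    {c : ℝ} (hb : (1:ℝ)/2 ≤ c)
    (h : ∀ w ∈ V, ⟪(Real.sqrt d)⁻¹ • w, x⟫ ≤ c) : gV V x ≤ c := by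
  unfold gV; rw [Finset.fold_max_le]; exact ⟨hb, h⟩

lemma le_gV {d : ℕ} {V : Finset (EuclideanSpace ℝ (Fin d))} {x w : EuclideanSpace ℝ (Fin d)}
    (hw : w ∈ V) : ⟪(Real.sqrt d)⁻¹ • w, x⟫ ≤ gV V x := by
  unfold gV; rw [Finset.le_fold_max]; exact Or.inr ⟨w, hw, le_rfl⟩

lemma inner_self_eq_d {d : ℕ} {w : EuclideanSpace ℝ (Fin d)}
    (hw : ∀ i, w i = 1 ∨ w i = -1) : ⟪w, w⟫ = (d : ℝ) := by
  simp only [PiLp.inner_apply, RCLike.inner_apply, conj_trivial]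
  have : ∀ i, w i * w i = 1 := fun i => by rcases hw i with h | h <;> rw [h] <;> ring
  simp [this]

lemma card_bad {α : Type*} [DecidableEq α] (n : ℕ) (W : Finset α) :
    ((Fintype.piFinset fun _ : Fin n => W.powerset).filter
      (fun Vs => ∀ w ∈ W, ∃ i, w ∈ Vs i)).card = (2^n - 1)^W.card := by
  have hT : ((Fintype.piFinset fun _ : Fin n => W.powerset).filter
      (fun Vs => ∀ w ∈ W, ∃ i, w ∈ Vs i)).card
      = (Fintype.piFinset fun _ : {x // x ∈ W} =>
          (Finset.univ : Finset (Finset (Fin n))).filter Finset.Nonempty).card := by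
    apply Finset.card_bij'
      (i := fun Vs _ => fun w : {x // x ∈ W} => Finset.univ.filter (fun j => (w : α) ∈ Vs j))
      (j := fun f _ => fun k : Fin n => W.filter (fun w => ∀ h : w ∈ W, k ∈ f ⟨w, h⟩))
    · intro Vs hVs
      simp only [Finset.mem_filter, Fintype.mem_piFinset] at hVs ⊢
      intro w
      refine ⟨Finset.mem_univ _, ?_⟩
      obtain ⟨i, hi⟩ := hVs.2 w w.2
      exact ⟨i, by simp [hi]⟩
    · intro f hf
      simp only [Fintype.mem_piFinset, Finset.mem_filter] at hf ⊢
      constructor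
      · intro k; exact Finset.mem_powerset.2 (Finset.filter_subset _ _)
      · intro w hw
        obtain ⟨k, hk⟩ := (hf ⟨w, hw⟩).2
        exact ⟨k, hw, fun h => hk⟩
    · intro Vs hVs
      simp only [Finset.mem_filter, Fintype.mem_piFinset] at hVs
      funext k
      ext w
      simp only [Finset.mem_filter, Finset.mem_univ, true_and]
      constructor
      · rintro ⟨hwW, h⟩; exact h hwW
      · intro h; exact ⟨Finset.mem_powerset.1 (hVs.1 k) h, fun _ => h⟩
    · intro f hf
      funext w
      ext k
      simp only [Finset.mem_filter, Finset.mem_univ, true_and]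
      constructor
      · rintro ⟨hwW, h⟩; exact h w.2
      · intro h; exact ⟨w.2, fun _ => h⟩
  rw [hT, Fintype.card_piFinset]
  have hcard : ((Finset.univ : Finset (Finset (Fin n))).filter Finset.Nonempty).card
      = 2^n - 1 := by
    have : ((Finset.univ : Finset (Finset (Fin n))).filter Finset.Nonempty)
        = Finset.univ.erase ∅ := by
      rw [← Finset.filter_ne']
      apply Finset.filter_congr
      intro s _
      simp [Finset.nonempty_iff_ne_empty]
    rw [this, Finset.card_erase_of_mem (Finset.mem_univ _)]
    simp [Fintype.card_finset]
  simp [hcard, Finset.prod_const, Fintype.card_coe]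

lemma num_ineq {m n : ℕ} (h : 2^n ≤ m) : 2 * (2^n - 1)^m < (2^m)^n := by
  rcases Nat.eq_zero_or_pos n with rfl | hn
  · have hm : 1 ≤ m := h
    simp [zero_pow (show m ≠ 0 by omega)]
  · have key : (2 : ℝ) * ((2:ℝ)^n - 1)^m < ((2:ℝ)^n)^m := by
      set a : ℝ := (2:ℝ)^n with hadef
      have ha2 : (2:ℝ) ≤ a := by
        calc (2:ℝ) = 2^1 := (pow_one 2).symm
        _ ≤ 2^n := pow_le_pow_right₀ (by norm_num) hn
      have ha1 : (0:ℝ) < a - 1 := by linarith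
      set x : ℝ := 1 / (a - 1) with hx
      have hx0 : 0 < x := by positivity
      have hax : a = (a - 1) * (1 + x) := by rw [hx]; field_simp; ring
      have hcast : ((2^n : ℕ) : ℝ) = a := by push_cast; rfl
      have hb : (2:ℝ) < (1 + x)^(2^n) := by
        have h1 : 1 + (2^n : ℕ) * x ≤ (1 + x)^(2^n : ℕ) :=
          one_add_mul_le_pow (by linarith) _
        have h2 : (1:ℝ) < (2^n : ℕ) * x := by
          rw [hcast, hx, mul_one_div, lt_div_iff₀ ha1]; linarith
        linarith
      have hb2 : (2:ℝ) < (1 + x)^m :=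
        hb.trans_le (pow_le_pow_right₀ (by linarith) h)
      have hpos : (0:ℝ) < (a - 1)^m := pow_pos ha1 m
      calc 2 * (a - 1)^m < (1 + x)^m * (a - 1)^m :=
            mul_lt_mul_of_pos_right hb2 hpos
        _ = ((a - 1) * (1 + x))^m := by rw [mul_pow]; ring
        _ = a^m := by rw [← hax]
    have h1 : ((2^n - 1 : ℕ) : ℝ) = (2:ℝ)^n - 1 := by
      rw [Nat.cast_sub Nat.one_le_two_pow]; push_cast; ring
    have final : ((2 * (2^n - 1)^m : ℕ) : ℝ) < (((2^m)^n : ℕ) : ℝ) := by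
      push_cast [h1]
      calc (2:ℝ) * ((2:ℝ)^n - 1)^m < ((2:ℝ)^n)^m := key
        _ = ((2:ℝ)^m)^n := by rw [← pow_mul, ← pow_mul, mul_comm]
    exact_mod_cast final

/-- Main lower bound, non-smooth ℓ₂ case: Let `K = B₂^d`, let
`W ⊆ {-1,1}^d` with `|W| ≥ 2^(d/6)` and `⟨u,v⟩ ≤ d/2` for distinct `u,v ∈ W`. Let
`F_D(x) = E_V[g_V(x)]` for `V` uniform over subsets of `W`, `F* = min_K F_D`, and
`F_S(x) = (1/n) Σᵢ g_{Vᵢ}(x)`. For every `n ≤ d/6`, with probability `> 1/2` over `S`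
drawn as `n` i.i.d. uniform subsets of `W`, there exists `xhat ∈ K` with
`F_S(xhat) = min_K F_S` and `F_D(xhat) - F* ≥ 1/4`. -/
theorem erm_lower_bound_nonsmooth_l2 {d n : ℕ} (hd : 0 < d)
    (W : Finset (EuclideanSpace ℝ (Fin d)))
    (hW : ∀ w ∈ W, ∀ i : Fin d, w i = 1 ∨ w i = -1)
    (hcard : (2 : ℝ) ^ ((d : ℝ) / 6) ≤ (W.card : ℝ))
    (hsep : ∀ u ∈ W, ∀ v ∈ W, u ≠ v → ⟪u, v⟫ ≤ (d : ℝ) / 2)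
    (hn : (n : ℝ) ≤ (d : ℝ) / 6)
    (K : Set (EuclideanSpace ℝ (Fin d))) (hK : K = Metric.closedBall 0 1)
    (FD : EuclideanSpace ℝ (Fin d) → ℝ)
    (hFD : FD = fun x => (∑ V ∈ W.powerset, gV V x) / (W.powerset.card : ℝ))
    (Fstar : ℝ) (hFstar : Fstar = sInf (FD '' K))
    (FS : (Fin n → Finset (EuclideanSpace ℝ (Fin d))) → EuclideanSpace ℝ (Fin d) → ℝ)
    (hFS : FS = fun Vs x => (∑ i : Fin n, gV (Vs i) x) / (n : ℝ)) :
    (((Fintype.piFinset fun _ : Fin n => W.powerset).filter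
        (fun Vs => ∃ xhat ∈ K, (∀ y ∈ K, FS Vs xhat ≤ FS Vs y) ∧
          FD xhat - Fstar ≥ 1/4)).card : ℝ) /
      ((Fintype.piFinset fun _ : Fin n => W.powerset).card : ℝ) > 1/2 := by
  have hd0 : (0:ℝ) < d := by exact_mod_cast hd
  have hsq : (0:ℝ) < Real.sqrt d := Real.sqrt_pos.2 hd0
  set m := W.card with hm
  -- 2^n ≤ m
  have h2nm : 2^n ≤ m := by
    have h1 : (2:ℝ)^(n:ℝ) ≤ (2:ℝ)^((d:ℝ)/6) :=
      Real.rpow_le_rpow_of_exponent_le one_le_two hn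
    rw [Real.rpow_natCast] at h1
    have : ((2^n : ℕ) : ℝ) ≤ (m : ℝ) := by push_cast; exact h1.trans hcard
    exact_mod_cast this
  have hm1 : 1 ≤ m := le_trans (Nat.one_le_two_pow) h2nm
  have hpcard : W.powerset.card = 2^m := Finset.card_powerset W
  have hpc0 : (0:ℝ) < (W.powerset.card : ℝ) := by
    rw [hpcard]; positivity
  -- scaled inner product
  have hinner : ∀ w w' : EuclideanSpace ℝ (Fin d),
      ⟪(Real.sqrt d)⁻¹ • w, (Real.sqrt d)⁻¹ • w'⟫ = ⟪w, w'⟫ / d := by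
    intro w w'
    rw [real_inner_smul_left, real_inner_smul_right, ← mul_assoc,
      ← mul_inv, Real.mul_self_sqrt hd0.le]
    rw [div_eq_inv_mul]
  -- FD x ≥ 1/2 for all x
  have hFDge : ∀ x, (1:ℝ)/2 ≤ FD x := by
    intro x
    rw [hFD]
    rw [le_div_iff₀ hpc0]
    calc (1:ℝ)/2 * (W.powerset.card : ℝ) = ∑ _V ∈ W.powerset, (1:ℝ)/2 := by
          rw [Finset.sum_const, nsmul_eq_mul, mul_comm]
      _ ≤ ∑ V ∈ W.powerset, gV V x := Finset.sum_le_sum fun V _ => gV_ge V x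
  -- FD 0 = 1/2
  have hFD0 : FD 0 = 1/2 := by
    have hgv0 : ∀ V : Finset (EuclideanSpace ℝ (Fin d)), gV V (0 : EuclideanSpace ℝ (Fin d)) = 1/2 := by
      intro V
      refine le_antisymm (gV_le le_rfl fun w _ => ?_) (gV_ge V 0)
      rw [inner_zero_right]
      norm_num
    rw [hFD]
    simp only [hgv0, Finset.sum_const, nsmul_eq_mul]
    field_simp
  have h0K : (0 : EuclideanSpace ℝ (Fin d)) ∈ K := by rw [hK]; simp
  -- Fstar ≤ 1/2
  have hFstar_le : Fstar ≤ 1/2 := by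
    rw [hFstar, ← hFD0]
    exact csInf_le ⟨1/2, fun y ⟨x, _, hxy⟩ => hxy ▸ hFDge x⟩ ⟨0, h0K, rfl⟩
  -- main geometric implication
  have hmain : ∀ Vs ∈ Fintype.piFinset fun _ : Fin n => W.powerset,
      (∃ w ∈ W, ∀ i, w ∉ Vs i) →
      ∃ xhat ∈ K, (∀ y ∈ K, FS Vs xhat ≤ FS Vs y) ∧ FD xhat - Fstar ≥ 1/4 := by
    rintro Vs hVs ⟨w, hwW, hwVs⟩
    rw [Fintype.mem_piFinset] at hVs
    set xh : EuclideanSpace ℝ (Fin d) := (Real.sqrt d)⁻¹ • w with hxh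
    have hwself : ⟪w, w⟫ = (d:ℝ) := inner_self_eq_d (hW w hwW)
    have hnorm : ‖xh‖ = 1 := by
      rw [hxh, norm_smul, Real.norm_eq_abs, abs_of_pos (inv_pos.2 hsq)]
      have h1 : ∀ i, ‖w i‖^2 = 1 := by
        intro i
        rcases hW w hwW i with h | h <;> rw [h] <;> norm_num
      have hnw : ‖w‖ = Real.sqrt d := by
        rw [EuclideanSpace.norm_eq]
        congr 1
        rw [Finset.sum_congr rfl (fun i _ => h1 i), Finset.sum_const, Finset.card_univ,
          Fintype.card_fin, nsmul_eq_mul, mul_one]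
      rw [hnw, inv_mul_cancel₀ hsq.ne']
    have hxhK : xh ∈ K := by
      rw [hK, Metric.mem_closedBall, dist_zero_right, hnorm]
    refine ⟨xh, hxhK, ?_, ?_⟩
    · -- ERM property
      intro y _
      rw [hFS]
      simp only
      have hgxh : ∀ i : Fin n, gV (Vs i) xh = 1/2 := by
        intro i
        refine le_antisymm (gV_le le_rfl fun v hv => ?_) (gV_ge _ _)
        rw [hxh, hinner]
        have hvW : v ∈ W := Finset.mem_powerset.1 (hVs i) hv
        have hvne : v ≠ w := fun h => hwVs i (h ▸ hv)
        have := hsep v hvW w hwW hvne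
        rw [div_le_div_iff₀ hd0 (by norm_num : (0:ℝ) < 2)]
        linarith
      have hsum : (∑ i : Fin n, gV (Vs i) xh) ≤ ∑ i : Fin n, gV (Vs i) y := by
        refine Finset.sum_le_sum fun i _ => ?_
        rw [hgxh i]; exact gV_ge _ _
      rcases Nat.eq_zero_or_pos n with hn0 | hn0
      · subst hn0; simp
      · exact div_le_div_of_nonneg_right hsum (Nat.cast_nonneg n)

    · -- FD xh ≥ 3/4
      have hFDxh : (3:ℝ)/4 ≤ FD xh := by
        rw [hFD]
        simp only
        rw [le_div_iff₀ hpc0]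
        have hstep : ∀ V ∈ W.powerset,
            (if w ∈ V then (1:ℝ) else 1/2) ≤ gV V xh := by
          intro V hV
          split_ifs with hwV
          · have := le_gV (x := xh) hwV
            rw [hxh, hinner, hwself, div_self hd0.ne'] at this
            exact this
          · exact gV_ge V xh
        have hsum : ∑ V ∈ W.powerset, (if w ∈ V then (1:ℝ) else 1/2)
            ≤ ∑ V ∈ W.powerset, gV V xh := Finset.sum_le_sum hstep
        -- compute the indicator sum
        have hfilneg : W.powerset.filter (fun V => w ∉ V) = (W.erase w).powerset := by
          ext V
          simp [Finset.mem_powerset, Finset.subset_erase, and_comm]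
        have hB : (W.powerset.filter (fun V => w ∉ V)).card = 2^(m-1) := by
          rw [hfilneg, Finset.card_powerset, Finset.card_erase_of_mem hwW]
        have hA : (W.powerset.filter (fun V => w ∈ V)).card = 2^m - 2^(m-1) := by
          have := Finset.card_filter_add_card_filter_not
            (s := W.powerset) (p := fun V => w ∈ V)
          rw [hB, hpcard] at this
          omega
        have hind : ∑ V ∈ W.powerset, (if w ∈ V then (1:ℝ) else 1/2)
            = ((2^m - 2^(m-1) : ℕ) : ℝ) * 1 + ((2^(m-1) : ℕ) : ℝ) * (1/2) := by
          rw [Finset.sum_ite, Finset.sum_const, Finset.sum_const, hA, hB,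
            nsmul_eq_mul, nsmul_eq_mul]
        have hmm : (2:ℝ)^m = 2 * 2^(m-1) := by
          conv_lhs => rw [show m = (m-1)+1 from (Nat.succ_pred_eq_of_pos hm1).symm]
          rw [pow_succ]; ring
        have hcast : ((2^m - 2^(m-1) : ℕ) : ℝ) = 2^m - 2^(m-1) := by
          have : 2^(m-1) ≤ 2^m := Nat.pow_le_pow_right (by norm_num) (Nat.sub_le m 1)
          push_cast [Nat.cast_sub this]
          ring_nf
        calc (3:ℝ)/4 * (W.powerset.card : ℝ) = 3/4 * 2^m := by rw [hpcard]; push_cast; ring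
          _ = ((2:ℝ)^m - 2^(m-1)) * 1 + (2:ℝ)^(m-1) * (1/2) := by rw [hmm]; ring
          _ = ∑ V ∈ W.powerset, (if w ∈ V then (1:ℝ) else 1/2) := by
              rw [hind, hcast]; push_cast; ring
          _ ≤ ∑ V ∈ W.powerset, gV V xh := hsum
      linarith
  -- counting
  set T := Fintype.piFinset fun _ : Fin n => W.powerset with hTdef
  have hTcard : T.card = (2^m)^n := by
    rw [hTdef, Fintype.card_piFinset]
    simp [hpcard]
  have hbadcard : (T.filter (fun Vs => ∀ w ∈ W, ∃ i, w ∈ Vs i)).card = (2^n - 1)^m :=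
    card_bad n W
  have hfiltereq : (T.filter (fun Vs => ∃ w ∈ W, ∀ i, w ∉ Vs i))
      = T.filter (fun Vs => ¬ ∀ w ∈ W, ∃ i, w ∈ Vs i) := by
    apply Finset.filter_congr
    intro Vs _
    push_neg
    tauto
  have hsplit : (T.filter (fun Vs => ∀ w ∈ W, ∃ i, w ∈ Vs i)).card
      + (T.filter (fun Vs => ∃ w ∈ W, ∀ i, w ∉ Vs i)).card = T.card := by
    rw [hfiltereq]
    exact Finset.card_filter_add_card_filter_not
      (s := T) (p := fun Vs => ∀ w ∈ W, ∃ i, w ∈ Vs i)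
  have hgoodsub : T.filter (fun Vs => ∃ w ∈ W, ∀ i, w ∉ Vs i)
      ⊆ T.filter (fun Vs => ∃ xhat ∈ K, (∀ y ∈ K, FS Vs xhat ≤ FS Vs y) ∧
          FD xhat - Fstar ≥ 1/4) := by
    intro Vs hVs
    rw [Finset.mem_filter] at hVs ⊢
    exact ⟨hVs.1, hmain Vs hVs.1 hVs.2⟩
  have hnum : 2 * (2^n - 1)^m < (2^m)^n := num_ineq h2nm
  have h1 := Finset.card_le_card hgoodsub
  have hnum' : 2 * ((T.filter (fun Vs => ∀ w ∈ W, ∃ i, w ∈ Vs i)).card : ℝ)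
      < (T.card : ℝ) := by
    rw [hbadcard, hTcard]
    exact_mod_cast hnum
  have hsplit' : ((T.filter (fun Vs => ∀ w ∈ W, ∃ i, w ∈ Vs i)).card : ℝ)
      + ((T.filter (fun Vs => ∃ w ∈ W, ∀ i, w ∉ Vs i)).card : ℝ) = (T.card : ℝ) := by
    exact_mod_cast hsplit
  have h1' : ((T.filter (fun Vs => ∃ w ∈ W, ∀ i, w ∉ Vs i)).card : ℝ)
      ≤ ((T.filter (fun Vs => ∃ xhat ∈ K, (∀ y ∈ K, FS Vs xhat ≤ FS Vs y) ∧
          FD xhat - Fstar ≥ 1/4)).card : ℝ) := by exact_mod_cast h1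
  have hT0 : (0:ℝ) < (T.card : ℝ) := by
    rw [hTcard]; positivity
  rw [gt_iff_lt, lt_div_iff₀ hT0]
  linarith
end
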